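/- arXiv:0905.2113 — 10 statements merged into one kernel-verified Lean document; each statement's English description precedes it below -/
import Mathlib

section
/- For every real r, every real s ≠ 0, and every ρ > 0, it is not the case that both ∮_{|z|=ρ} i·s·(z−r)²/z dz + conj(∮_{|z|=ρ} i·s·(rz+1)²/z³ dz) = 0 and Re(∮_{|z|=ρ} i·s·(rz+1)(z−r)/z² dz) = 0 hold (circle integrals over the circle of radius ρ centered at 0, counterclockwise). Indeed the first expression equals −4π s r² and the real part equals −2π s(1−r²), and these cannot vanish simultaneously. -/
open Complex Real

lemma my_integral_add {f g : ℂ → ℂ} {c : ℂ} {R : ℝ} (hf : CircleIntegrable f c R)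
    (hg : CircleIntegrable g c R) :
    (∮ z in C(c, R), f z + g z) = (∮ z in C(c, R), f z) + ∮ z in C(c, R), g z := by
  simp only [circleIntegral, smul_add, intervalIntegral.integral_add hf.out hg.out]

lemma circle_zpow (ρ : ℝ) (hρ : 0 < ρ) (n : ℤ) :
    (∮ z in C((0:ℂ), ρ), z ^ n) = if n = -1 then 2 * π * I else 0 := by
  split_ifs with h
  · subst h
    have := circleIntegral.integral_sub_inv_of_mem_ball (c := (0:ℂ)) (w := 0) (R := ρ)
      (by simpa using hρ)
    simpa [zpow_neg, zpow_one] using this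
  · simpa using circleIntegral.integral_sub_zpow_of_ne h 0 0 ρ

lemma ci_zpow (ρ : ℝ) (hρ : 0 < ρ) (n : ℤ) (a : ℂ) :
    CircleIntegrable (fun z : ℂ => a * z ^ n) 0 ρ := by
  refine ContinuousOn.circleIntegrable hρ.le ?_
  refine continuousOn_const.mul (ContinuousOn.zpow₀ continuousOn_id _ fun z hz => ?_)
  left
  simp only [Metric.mem_sphere, dist_zero_right] at hz
  intro h
  simp only [id] at h
  rw [h] at hz; simp at hz
  exact absurd hz hρ.ne

lemma circle_amul_zpow (ρ : ℝ) (hρ : 0 < ρ) (n : ℤ) (a : ℂ) :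
    (∮ z in C((0:ℂ), ρ), a * z ^ n) = if n = -1 then 2 * π * I * a else 0 := by
  rw [circleIntegral.integral_const_mul, circle_zpow ρ hρ]
  split_ifs <;> ring

lemma circle_five (ρ : ℝ) (hρ : 0 < ρ) (c₁ c₀ m1 m2 m3 : ℂ) :
    (∮ z in C((0:ℂ), ρ),
      (c₁ * z ^ (1:ℤ) + c₀ * z ^ (0:ℤ) + m1 * z ^ (-1:ℤ) + m2 * z ^ (-2:ℤ) + m3 * z ^ (-3:ℤ)))
      = 2 * π * I * m1 := by
  have h1 := ci_zpow ρ hρ 1 c₁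
  have h0 := ci_zpow ρ hρ 0 c₀
  have hm1 := ci_zpow ρ hρ (-1) m1
  have hm2 := ci_zpow ρ hρ (-2) m2
  have hm3 := ci_zpow ρ hρ (-3) m3
  have h10 : CircleIntegrable (fun z : ℂ => c₁ * z ^ (1:ℤ) + c₀ * z ^ (0:ℤ)) 0 ρ := h1.add h0
  have h101 : CircleIntegrable (fun z : ℂ => c₁ * z ^ (1:ℤ) + c₀ * z ^ (0:ℤ) + m1 * z ^ (-1:ℤ)) 0 ρ := h10.add hm1
  have h1012 : CircleIntegrable (fun z : ℂ => c₁ * z ^ (1:ℤ) + c₀ * z ^ (0:ℤ) + m1 * z ^ (-1:ℤ) + m2 * z ^ (-2:ℤ)) 0 ρ := h101.add hm2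
  rw [my_integral_add h1012 hm3, my_integral_add h101 hm2, my_integral_add h10 hm1,
      my_integral_add h1 h0, circle_amul_zpow ρ hρ, circle_amul_zpow ρ hρ,
      circle_amul_zpow ρ hρ, circle_amul_zpow ρ hρ, circle_amul_zpow ρ hρ]
  norm_num

lemma sphere_ne (ρ : ℝ) (hρ : 0 < ρ) {z : ℂ} (hz : z ∈ Metric.sphere (0:ℂ) ρ) : z ≠ 0 := by
  simp only [Metric.mem_sphere, dist_zero_right] at hz
  intro h; rw [h] at hz; simp at hz; exact absurd hz hρ.ne

theorem stmt_2 (r s : ℝ) (hs : s ≠ 0) (ρ : ℝ) (hρ : 0 < ρ) :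
    ((∮ z in C(0, ρ), Complex.I * (s : ℂ) * (z - (r : ℂ)) ^ 2 / z)
        + (starRingEnd ℂ) (∮ z in C(0, ρ), Complex.I * (s : ℂ) * ((r : ℂ) * z + 1) ^ 2 / z ^ 3)
      = -(4 * (Real.pi : ℂ) * (s : ℂ) * (r : ℂ) ^ 2)) ∧
    ((∮ z in C(0, ρ), Complex.I * (s : ℂ) * ((r : ℂ) * z + 1) * (z - (r : ℂ)) / z ^ 2).re
      = -(2 * Real.pi * s * (1 - r ^ 2))) ∧
    ¬ (((∮ z in C(0, ρ), Complex.I * (s : ℂ) * (z - (r : ℂ)) ^ 2 / z)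
          + (starRingEnd ℂ) (∮ z in C(0, ρ), Complex.I * (s : ℂ) * ((r : ℂ) * z + 1) ^ 2 / z ^ 3) = 0)
        ∧ (∮ z in C(0, ρ), Complex.I * (s : ℂ) * ((r : ℂ) * z + 1) * (z - (r : ℂ)) / z ^ 2).re = 0) := by
  have hA : (∮ z in C(0, ρ), Complex.I * (s : ℂ) * (z - (r : ℂ)) ^ 2 / z)
      = 2 * π * I * (I * s * r ^ 2) := by
    rw [circleIntegral.integral_congr (f := fun z => Complex.I * (s:ℂ) * (z - (r:ℂ))^2 / z)
      (g := fun z => (I * s) * z ^ (1:ℤ) + (-2 * I * s * r) * z ^ (0:ℤ)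
        + (I * s * r ^ 2) * z ^ (-1:ℤ) + 0 * z ^ (-2:ℤ) + 0 * z ^ (-3:ℤ)) hρ.le ?_,
      circle_five ρ hρ]
    intro z hz
    have hz0 : z ≠ 0 := sphere_ne ρ hρ hz
    show _ / _ = _
    rw [div_eq_iff hz0]
    simp only [zpow_neg, zpow_one, zpow_zero, zpow_ofNat]
    field_simp
    ring
  have hB : (∮ z in C(0, ρ), Complex.I * (s : ℂ) * ((r : ℂ) * z + 1) ^ 2 / z ^ 3)
      = 2 * π * I * (I * s * r ^ 2) := by
    rw [circleIntegral.integral_congr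
      (f := fun z => Complex.I * (s:ℂ) * ((r:ℂ) * z + 1)^2 / z ^ 3)
      (g := fun z => (0:ℂ) * z ^ (1:ℤ) + 0 * z ^ (0:ℤ)
        + (I * s * r ^ 2) * z ^ (-1:ℤ) + (2 * I * s * r) * z ^ (-2:ℤ) + (I * s) * z ^ (-3:ℤ))
      hρ.le ?_, circle_five ρ hρ]
    intro z hz
    have hz0 : z ≠ 0 := sphere_ne ρ hρ hz
    show _ / _ = _
    rw [div_eq_iff (pow_ne_zero 3 hz0)]
    simp only [zpow_neg, zpow_one, zpow_zero, zpow_ofNat]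
    field_simp
    ring
  have hC : (∮ z in C(0, ρ), Complex.I * (s : ℂ) * ((r : ℂ) * z + 1) * (z - (r : ℂ)) / z ^ 2)
      = 2 * π * I * (I * s * (1 - r ^ 2)) := by
    rw [circleIntegral.integral_congr
      (f := fun z => Complex.I * (s:ℂ) * ((r:ℂ) * z + 1) * (z - (r:ℂ)) / z ^ 2)
      (g := fun z => (0:ℂ) * z ^ (1:ℤ) + (I * s * r) * z ^ (0:ℤ)
        + (I * s * (1 - r ^ 2)) * z ^ (-1:ℤ) + (-(I * s * r)) * z ^ (-2:ℤ) + 0 * z ^ (-3:ℤ))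
      hρ.le ?_, circle_five ρ hρ]
    intro z hz
    have hz0 : z ≠ 0 := sphere_ne ρ hρ hz
    show _ / _ = _
    rw [div_eq_iff (pow_ne_zero 2 hz0)]
    simp only [zpow_neg, zpow_one, zpow_zero, zpow_ofNat]
    field_simp
    ring
  have e1 : (∮ z in C(0, ρ), Complex.I * (s : ℂ) * (z - (r : ℂ)) ^ 2 / z)
        + (starRingEnd ℂ) (∮ z in C(0, ρ), Complex.I * (s : ℂ) * ((r : ℂ) * z + 1) ^ 2 / z ^ 3)
      = -(4 * (Real.pi : ℂ) * (s : ℂ) * (r : ℂ) ^ 2) := by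
    rw [hA, hB]
    have : (2 * (π:ℂ) * I * (I * s * r ^ 2)) = ((-(2 * π * s * r ^ 2) : ℝ) : ℂ) := by
      push_cast; ring_nf; rw [Complex.I_sq]; ring
    rw [this, Complex.conj_ofReal]
    push_cast; ring
  have e2 : (∮ z in C(0, ρ), Complex.I * (s : ℂ) * ((r : ℂ) * z + 1) * (z - (r : ℂ)) / z ^ 2).re
      = -(2 * Real.pi * s * (1 - r ^ 2)) := by
    rw [hC]
    have : (2 * (π:ℂ) * I * (I * s * (1 - r ^ 2))) = ((-(2 * π * s * (1 - r^2)) : ℝ) : ℂ) := by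
      push_cast; ring_nf; rw [Complex.I_sq]; ring
    rw [this, Complex.ofReal_re]
  refine ⟨e1, e2, ?_⟩
  rintro ⟨h1, h2⟩
  rw [e1] at h1
  rw [e2] at h2
  have hπ := Real.pi_pos
  have h1' : (4 * π * s * r ^ 2 : ℝ) = 0 := by
    have hc : ((4 * π * s * r ^ 2 : ℝ) : ℂ) = 0 := by push_cast; linear_combination -h1
    exact_mod_cast hc
  have hr : r ^ 2 = 0 := by
    by_contra h
    exact (mul_ne_zero (mul_ne_zero (mul_ne_zero (by norm_num : (4:ℝ) ≠ 0) hπ.ne') hs) h) h1'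
  rw [hr] at h2
  have : 2 * π * s = 0 := by linarith
  rcases mul_eq_zero.mp this with h | h
  · rcases mul_eq_zero.mp h with h' | h'
    · norm_num at h'
    · exact hπ.ne' h'
  · exact hs h
end

section
/- For all complex numbers r, s and every ρ > 0, ∮_{|z|=ρ} i(rz−1)²(sz−1)²/z dz + conj(∮_{|z|=ρ} i(z+conj(r))²(z+conj(s))²/z⁵ dz) = −4π (circle integrals over the circle of radius ρ centered at 0, counterclockwise); in particular this sum never vanishes. -/
open Complex Real

private lemma sphere_ne_zero' {ρ : ℝ} (hρ : 0 < ρ) {z : ℂ} (hz : z ∈ Metric.sphere (0:ℂ) ρ) :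
    z ≠ 0 := by
  intro h
  rw [Metric.mem_sphere, h, dist_self] at hz
  exact hρ.ne hz

private lemma mono_integrable' {ρ : ℝ} (hρ : 0 < ρ) (a : ℂ) (n : ℤ) :
    CircleIntegrable (fun z => a * z ^ n) 0 ρ := by
  refine ContinuousOn.circleIntegrable hρ.le ?_
  exact continuousOn_const.mul (continuousOn_id.zpow₀ n fun z hz =>
    Or.inl (sphere_ne_zero' hρ hz))

private lemma circle_integral_add' {f g : ℂ → ℂ} {c : ℂ} {R : ℝ} (hf : CircleIntegrable f c R)
    (hg : CircleIntegrable g c R) :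
    (∮ z in C(c, R), (f z + g z)) = (∮ z in C(c, R), f z) + ∮ z in C(c, R), g z := by
  simp only [circleIntegral, smul_add, intervalIntegral.integral_add hf.out hg.out]

private lemma mono_integral' {ρ : ℝ} (hρ : 0 < ρ) (a : ℂ) (n : ℤ) :
    (∮ z in C(0, ρ), a * z ^ n) = if n = -1 then a * (2 * π * Complex.I) else 0 := by
  rw [circleIntegral.integral_const_mul]
  split_ifs with h
  · subst h
    have := circleIntegral.integral_sub_center_inv (0:ℂ) (R := ρ) hρ.ne'
    simp only [sub_zero] at this
    simp [zpow_neg_one, this]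
  · have := circleIntegral.integral_sub_zpow_of_ne (n := n) h 0 0 ρ
    simp only [sub_zero] at this
    rw [this, mul_zero]

private lemma five_term' {ρ : ℝ} (hρ : 0 < ρ) (a b c d e : ℂ) (n₁ n₂ n₃ n₄ n₅ : ℤ)
    (h1 : n₁ ≠ -1) (h2 : n₂ ≠ -1) (h3 : n₃ ≠ -1) (h4 : n₄ ≠ -1) (h5 : n₅ = -1) :
    (∮ z in C(0, ρ), (a * z ^ n₁ + b * z ^ n₂ + c * z ^ n₃ + d * z ^ n₄ + e * z ^ n₅))
      = e * (2 * π * Complex.I) := by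
  have i1 := mono_integrable' hρ a n₁
  have i2 := mono_integrable' hρ b n₂
  have i3 := mono_integrable' hρ c n₃
  have i4 := mono_integrable' hρ d n₄
  have i5 := mono_integrable' hρ e n₅
  have i12 : CircleIntegrable (fun z => a * z ^ n₁ + b * z ^ n₂) 0 ρ := i1.add i2
  have i123 : CircleIntegrable (fun z => a * z ^ n₁ + b * z ^ n₂ + c * z ^ n₃) 0 ρ := i12.add i3
  have i1234 : CircleIntegrable
      (fun z => a * z ^ n₁ + b * z ^ n₂ + c * z ^ n₃ + d * z ^ n₄) 0 ρ := i123.add i4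
  rw [circle_integral_add' i1234 i5, circle_integral_add' i123 i4, circle_integral_add' i12 i3,
    circle_integral_add' i1 i2, mono_integral' hρ a n₁, mono_integral' hρ b n₂,
    mono_integral' hρ c n₃, mono_integral' hρ d n₄, mono_integral' hρ e n₅]
  simp [h1, h2, h3, h4, h5]

theorem stmt_3 (r s : ℂ) (ρ : ℝ) (hρ : 0 < ρ) :
    ((∮ z in C(0, ρ), Complex.I * (r * z - 1) ^ 2 * (s * z - 1) ^ 2 / z)
        + (starRingEnd ℂ)
            (∮ z in C(0, ρ),
              Complex.I * (z + (starRingEnd ℂ) r) ^ 2 * (z + (starRingEnd ℂ) s) ^ 2 / z ^ 5)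
      = -(4 * (Real.pi : ℂ))) ∧
    ((∮ z in C(0, ρ), Complex.I * (r * z - 1) ^ 2 * (s * z - 1) ^ 2 / z)
        + (starRingEnd ℂ)
            (∮ z in C(0, ρ),
              Complex.I * (z + (starRingEnd ℂ) r) ^ 2 * (z + (starRingEnd ℂ) s) ^ 2 / z ^ 5)
      ≠ 0) := by
  set a := (starRingEnd ℂ) r
  set b := (starRingEnd ℂ) s
  have hI : Complex.I * (2 * (π : ℂ) * Complex.I) = -(2 * (π : ℂ)) := by
    linear_combination (2 * (π : ℂ)) * Complex.I_sq
  have h1 : (∮ z in C(0, ρ), Complex.I * (r * z - 1) ^ 2 * (s * z - 1) ^ 2 / z)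
      = -(2 * (π : ℂ)) := by
    have key := five_term' hρ (Complex.I * r^2 * s^2) (-(2 * Complex.I * r * s * (r + s)))
      (Complex.I * (r^2 + 4*r*s + s^2)) (-(2 * Complex.I * (r + s))) Complex.I
      3 2 1 0 (-1) (by decide) (by decide) (by decide) (by decide) rfl
    rw [← circleIntegral.integral_congr hρ.le (fun z hz => ?_)] at key
    · rw [key, hI]
    · have hz0 := sphere_ne_zero' hρ hz
      simp only [zpow_neg, zpow_one, zpow_zero, show (3:ℤ) = ((3:ℕ):ℤ) from rfl,
        show (2:ℤ) = ((2:ℕ):ℤ) from rfl, zpow_natCast]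
      field_simp
      ring
  have h2 : (∮ z in C(0, ρ), Complex.I * (z + a) ^ 2 * (z + b) ^ 2 / z ^ 5)
      = -(2 * (π : ℂ)) := by
    have key := five_term' hρ (Complex.I * a^2 * b^2) (2 * Complex.I * a * b * (a + b))
      (Complex.I * (a^2 + 4*a*b + b^2)) (2 * Complex.I * (a + b)) Complex.I
      (-5) (-4) (-3) (-2) (-1) (by decide) (by decide) (by decide) (by decide) rfl
    rw [← circleIntegral.integral_congr hρ.le (fun z hz => ?_)] at key
    · rw [key, hI]
    · have hz0 := sphere_ne_zero' hρ hz
      have hk : ∀ k m : ℕ, k + m = 5 → z ^ (-(k:ℤ)) = z ^ m / z ^ 5 := by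
        intro k m hkm
        rw [zpow_neg, zpow_natCast, eq_div_iff (pow_ne_zero 5 hz0), ← hkm, pow_add,
          inv_mul_cancel_left₀ (pow_ne_zero k hz0)]
      rw [show (-5:ℤ) = -((5:ℕ):ℤ) from rfl, show (-4:ℤ) = -((4:ℕ):ℤ) from rfl,
        show (-3:ℤ) = -((3:ℕ):ℤ) from rfl, show (-2:ℤ) = -((2:ℕ):ℤ) from rfl,
        show (-1:ℤ) = -((1:ℕ):ℤ) from rfl, hk 5 0 rfl, hk 4 1 rfl, hk 3 2 rfl,
        hk 2 3 rfl, hk 1 4 rfl]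
      field_simp
      ring
  rw [h1, h2]
  have hc : (starRingEnd ℂ) (-(2 * (π : ℂ))) = -(2 * (π : ℂ)) := by
    rw [map_neg, map_mul, Complex.conj_ofReal, map_ofNat]
  rw [hc]
  refine ⟨by ring, ?_⟩
  have hπ : (π : ℂ) ≠ 0 := Complex.ofReal_ne_zero.mpr Real.pi_ne_zero
  intro h
  apply hπ
  linear_combination (-1/4 : ℂ) * h
end

section
/- For every real r, all complex numbers s, t, and every ρ > 0, ∮_{|z|=ρ} i(rz−1)²(sz−1)²(tz−1)²/z³ dz + conj(∮_{|z|=ρ} i(z+r)²(z+conj(s))²(z+conj(t))²/z⁵ dz) = −4π(r² + s² + t² + 4rs + 4st + 4tr) (circle integrals over the circle of radius ρ centered at 0, counterclockwise). -/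
/-!
Both integrands are polynomials divided by a power of `z`, so each integral is `2πi` times a single
coefficient of the numerator. For the squared cubics these coefficients are
`i (a² + b² + c² + 4ab + 4bc + 4ca)`, evaluated at `(r, s, t)` and at `(r, s̄, t̄)`; conjugating the
second integral turns `i · i` into `(-i) · (-i)`, so both contribute
`-2π (r² + s² + t² + 4rs + 4st + 4tr)`.
-/
open Complex Polynomial Metric Real

namespace circleIntegral

theorem integral_zpow_center_zero {R : ℝ} (hR : R ≠ 0) (n : ℤ) :
    (∮ z in C(0, R), z ^ n) = if n = -1 then 2 * π * I else 0 := by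
  split_ifs with hn
  · simpa [hn] using integral_sub_center_inv (0 : ℂ) hR
  · simpa using integral_sub_zpow_of_ne hn 0 0 R

theorem circleIntegrable_zpow_center_zero {R : ℝ} (hR : R ≠ 0) (n : ℤ) :
    CircleIntegrable (fun z : ℂ => z ^ n) 0 R := by
  have hcenter : (0 : ℂ) ∉ sphere 0 |R| := by simpa using (abs_pos.2 hR).ne
  simpa using circleIntegrable_sub_zpow_iff.2 (Or.inr (Or.inr hcenter) :
    R = 0 ∨ 0 ≤ n ∨ (0 : ℂ) ∉ sphere 0 |R|)

theorem integral_eval_div_pow_succ (p : ℂ[X]) (n : ℕ) {R : ℝ} (hR : R ≠ 0) :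
    (∮ z in C(0, R), p.eval z / z ^ (n + 1)) = 2 * π * I * p.coeff n := by
  set N := p.natDegree + n + 1
  have hN : n < N := by omega
  have expand : ∀ z : ℂ, z ≠ 0 →
      p.eval z / z ^ (n + 1) = ∑ i ∈ Finset.range N, p.coeff i * z ^ ((i : ℤ) - (n + 1)) := by
    intro z hz
    rw [p.eval_eq_sum_range' (show p.natDegree < N by omega), Finset.sum_div]
    refine Finset.sum_congr rfl fun i _ => ?_
    rw [zpow_sub₀ hz, zpow_natCast, mul_div_assoc]
    norm_cast
  calc (∮ z in C(0, R), p.eval z / z ^ (n + 1))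
      = ∮ z in C(0, R), ∑ i ∈ Finset.range N, p.coeff i * z ^ ((i : ℤ) - (n + 1)) :=
        intervalIntegral.integral_congr fun θ _ => by
          simp only [expand _ (circleMap_ne_center hR)]
    _ = ∑ i ∈ Finset.range N, p.coeff i * if i = n then 2 * π * I else 0 := by
        rw [integral_fun_sum (f := fun i z => p.coeff i * z ^ ((i : ℤ) - (n + 1)))
          fun i _ => (circleIntegrable_zpow_center_zero hR _).const_fun_smul (a := p.coeff i)]
        refine Finset.sum_congr rfl fun i _ => ?_
        rw [integral_const_mul, integral_zpow_center_zero hR]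
        simp only [show (i : ℤ) - (n + 1) = -1 ↔ i = n by omega]
    _ = 2 * π * I * p.coeff n := by simp [hN, mul_comm]

end circleIntegral

namespace Polynomial

variable {R : Type*} [CommRing R]

theorem coeff_two_C_mul_sq_C_mul_X_sub_one (k a b c : R) :
    (C k * (C a * X - 1) ^ 2 * (C b * X - 1) ^ 2 * (C c * X - 1) ^ 2).coeff 2
      = k * (a ^ 2 + b ^ 2 + c ^ 2 + 4 * a * b + 4 * b * c + 4 * c * a) := by
  simp [coeff_mul, Finset.Nat.antidiagonal_succ, pow_two, coeff_X, coeff_one]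
  ring

theorem coeff_four_C_mul_sq_X_add_C (k a b c : R) :
    (C k * (X + C a) ^ 2 * (X + C b) ^ 2 * (X + C c) ^ 2).coeff 4
      = k * (a ^ 2 + b ^ 2 + c ^ 2 + 4 * a * b + 4 * b * c + 4 * c * a) := by
  simp [coeff_mul, Finset.Nat.antidiagonal_succ, pow_two, coeff_X]
  ring

end Polynomial

open circleIntegral in
theorem stmt_4 (r : ℝ) (s t : ℂ) (ρ : ℝ) (hρ : 0 < ρ) :
    (∮ z in C(0, ρ),
        Complex.I * ((r : ℂ) * z - 1) ^ 2 * (s * z - 1) ^ 2 * (t * z - 1) ^ 2 / z ^ 3)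
      + (starRingEnd ℂ)
          (∮ z in C(0, ρ),
            Complex.I * (z + (r : ℂ)) ^ 2 * (z + (starRingEnd ℂ) s) ^ 2
              * (z + (starRingEnd ℂ) t) ^ 2 / z ^ 5)
      = -(4 * (Real.pi : ℂ)
            * ((r : ℂ) ^ 2 + s ^ 2 + t ^ 2 + 4 * (r : ℂ) * s + 4 * s * t + 4 * t * (r : ℂ))) := by
  have h₁ := integral_eval_div_pow_succ
    (C I * (C (r : ℂ) * X - 1) ^ 2 * (C s * X - 1) ^ 2 * (C t * X - 1) ^ 2) 2 hρ.ne'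
  have h₂ := integral_eval_div_pow_succ
    (C I * (X + C (r : ℂ)) ^ 2 * (X + C (starRingEnd ℂ s)) ^ 2 * (X + C (starRingEnd ℂ t)) ^ 2)
    4 hρ.ne'
  simp only [coeff_two_C_mul_sq_C_mul_X_sub_one, coeff_four_C_mul_sq_X_add_C, eval_mul, eval_pow,
    eval_sub, eval_add, eval_C, eval_X, eval_one, Nat.reduceAdd] at h₁ h₂
  rw [h₁, h₂]
  simp only [map_mul, map_add, map_pow, map_ofNat, conj_I, conj_conj, conj_ofReal]
  linear_combination
    (4 * π * ((r : ℂ) ^ 2 + s ^ 2 + t ^ 2 + 4 * r * s + 4 * s * t + 4 * t * r)) * I_sq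
end

section
/- For every real r, all complex numbers s, t, and every ρ > 0, the circle integral ∮_{|z|=ρ} i(rz−1)(z+r)(sz−1)(z+conj(s))(tz−1)(z+conj(t))/z⁴ dz (over the circle of radius ρ centered at 0, counterclockwise) equals −2π·[ (r²−1)·((|s|²−1)(|t|²−1) − s·conj(t) − conj(s)·t) − r·((|s|²−1)(t+conj(t)) + (|t|²−1)(s+conj(s))) ]. -/
/-!
Pairing the factors as `(a z - 1)(z + conj a) = z (a z + (|a|² - 1) - conj a / z)` turns the
integrand into `i / z` times a product of three Laurent trinomials. Integrating a Laurent
polynomial around `0` only sees its `z⁻¹` coefficient, so the integral is `2πi · i` times the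
constant term of the product of the trinomials, which is the bracket on the right-hand side.
-/

open Complex Real

theorem circleIntegral_sum_mul_sub_zpow {ι : Type*} (s : Finset ι) (a : ι → ℂ) (e : ι → ℤ)
    (c : ℂ) {R : ℝ} (hR : R ≠ 0) :
    (∮ z in C(c, R), ∑ i ∈ s, a i * (z - c) ^ e i) = 2 * π * I * ∑ i ∈ s with e i = -1, a i := by
  have hc : c ∉ Metric.sphere c |R| := by simpa [eq_comm] using hR
  have hint (i : ι) : CircleIntegrable (fun z ↦ a i * (z - c) ^ e i) c R :=
    (circleIntegrable_sub_zpow_iff.mpr (.inr (.inr hc))).const_mul (a i)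
  rw [circleIntegral.integral_fun_sum fun i _ ↦ hint i, Finset.sum_filter, Finset.mul_sum]
  refine Finset.sum_congr rfl fun i _ ↦ ?_
  rw [circleIntegral.integral_const_mul]
  split_ifs with he
  · simp only [he, zpow_neg_one, circleIntegral.integral_sub_center_inv c hR, mul_comm]
  · rw [circleIntegral.integral_sub_zpow_of_ne he, mul_zero, mul_zero]

theorem circleIntegral_trinomial_mul_trinomial_mul_trinomial_div
    (u₁ a₁ v₁ u₂ a₂ v₂ u₃ a₃ v₃ : ℂ) {R : ℝ} (hR : 0 < R) :
    (∮ z in C(0, R),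
        (u₁ * z + a₁ + v₁ / z) * (u₂ * z + a₂ + v₂ / z) * (u₃ * z + a₃ + v₃ / z) / z)
      = 2 * π * I * (a₁ * a₂ * a₃ + a₁ * (u₂ * v₃ + v₂ * u₃) + a₂ * (u₁ * v₃ + v₁ * u₃)
          + a₃ * (u₁ * v₂ + v₁ * u₂)) := by
  have hexpand (z : ℂ) (hz : z ≠ 0) :
      (u₁ * z + a₁ + v₁ / z) * (u₂ * z + a₂ + v₂ / z) * (u₃ * z + a₃ + v₃ / z) / z
        = ∑ i : Fin 7, ![v₁ * v₂ * v₃,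
            a₁ * v₂ * v₃ + v₁ * a₂ * v₃ + v₁ * v₂ * a₃,
            v₁ * v₂ * u₃ + v₁ * u₂ * v₃ + u₁ * v₂ * v₃ + a₁ * a₂ * v₃ + a₁ * v₂ * a₃ + v₁ * a₂ * a₃,
            a₁ * a₂ * a₃ + a₁ * (u₂ * v₃ + v₂ * u₃) + a₂ * (u₁ * v₃ + v₁ * u₃)
              + a₃ * (u₁ * v₂ + v₁ * u₂),
            u₁ * u₂ * v₃ + u₁ * v₂ * u₃ + v₁ * u₂ * u₃ + a₁ * a₂ * u₃ + a₁ * u₂ * a₃ + u₁ * a₂ * a₃,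
            a₁ * u₂ * u₃ + u₁ * a₂ * u₃ + u₁ * u₂ * a₃,
            u₁ * u₂ * u₃] i * (z - 0) ^ ((i : ℤ) - 4) := by
    simp only [Fin.sum_univ_seven, Fin.isValue, Matrix.cons_val_zero, Matrix.cons_val_one,
      Matrix.cons_val, Fin.coe_ofNat_eq_mod, Nat.reduceMod, Nat.zero_mod, Nat.one_mod,
      Nat.mod_succ, CharP.cast_eq_zero, Nat.cast_one, Nat.cast_ofNat, sub_zero, zero_sub,
      Int.reduceNeg, Int.reduceSub, sub_self, zpow_neg, zpow_ofNat, pow_zero, pow_one, mul_one]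
    field_simp
    ring
  rw [circleIntegral.integral_congr hR.le fun z hz ↦
      hexpand z (ne_zero_of_mem_sphere hR.ne' ⟨z, hz⟩),
    circleIntegral_sum_mul_sub_zpow _ _ _ _ hR.ne']
  simp [Finset.sum_filter, Fin.sum_univ_seven]

theorem mul_sub_one_mul_add_conj (a : ℂ) {z : ℂ} (hz : z ≠ 0) :
    (a * z - 1) * (z + starRingEnd ℂ a)
      = z * (a * z + ((‖a‖ : ℂ) ^ 2 - 1) + -starRingEnd ℂ a / z) := by
  rw [← mul_conj']
  field_simp
  ring

theorem stmt_5 (r : ℝ) (s t : ℂ) (ρ : ℝ) (hρ : 0 < ρ) :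
    (∮ z in C(0, ρ),
        Complex.I * ((r : ℂ) * z - 1) * (z + (r : ℂ)) * (s * z - 1) * (z + (starRingEnd ℂ) s)
          * (t * z - 1) * (z + (starRingEnd ℂ) t) / z ^ 4)
      = -(2 * (Real.pi : ℂ)
          * (((r : ℂ) ^ 2 - 1)
              * (((‖s‖ : ℂ) ^ 2 - 1) * ((‖t‖ : ℂ) ^ 2 - 1)
                  - s * (starRingEnd ℂ) t - (starRingEnd ℂ) s * t)
            - (r : ℂ)
              * (((‖s‖ : ℂ) ^ 2 - 1) * (t + (starRingEnd ℂ) t)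
                  + ((‖t‖ : ℂ) ^ 2 - 1) * (s + (starRingEnd ℂ) s)))) := by
  have hsplit : ∀ z ∈ Metric.sphere (0 : ℂ) ρ,
      I * ((r : ℂ) * z - 1) * (z + (r : ℂ)) * (s * z - 1) * (z + starRingEnd ℂ s)
          * (t * z - 1) * (z + starRingEnd ℂ t) / z ^ 4
        = I * ((r * z + ((r : ℂ) ^ 2 - 1) + -r / z)
            * (s * z + ((‖s‖ : ℂ) ^ 2 - 1) + -starRingEnd ℂ s / z)
            * (t * z + ((‖t‖ : ℂ) ^ 2 - 1) + -starRingEnd ℂ t / z) / z) := by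
    intro z hz
    have hz0 : z ≠ 0 := ne_zero_of_mem_sphere hρ.ne' ⟨z, hz⟩
    have hr : ((r : ℂ) * z - 1) * (z + r) = z * (r * z + ((r : ℂ) ^ 2 - 1) + -r / z) := by
      simpa [← ofReal_pow, sq_abs] using mul_sub_one_mul_add_conj (r : ℂ) hz0
    calc _ = I * (((r : ℂ) * z - 1) * (z + r)) * ((s * z - 1) * (z + starRingEnd ℂ s))
          * ((t * z - 1) * (z + starRingEnd ℂ t)) / z ^ 4 := by ring
      _ = _ := by
        rw [hr, mul_sub_one_mul_add_conj s hz0, mul_sub_one_mul_add_conj t hz0]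
        field_simp
  rw [circleIntegral.integral_congr hρ.le hsplit, circleIntegral.integral_const_mul,
    circleIntegral_trinomial_mul_trinomial_mul_trinomial_div _ _ _ _ _ _ _ _ _ hρ,
    show ∀ w : ℂ, I * (2 * π * I * w) = -(2 * π * w) from fun w ↦ by
      linear_combination 2 * π * w * I_sq]
  ring
end

section
/- For every real r ≥ 1, h(r) < 0; consequently every r > 0 with h(r) = 0 satisfies r < 1. -/
open MeasureTheory Real Filter

/-- `u r z = √(z(1−rz)/(z+r))`, the real branch of `|w_r|` on `(0, 1/r)`. -/
noncomputable def u (r z : ℝ) : ℝ := Real.sqrt (z * (1 - r * z) / (z + r))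

/-- The period function `h` of the candidate maximal Klein bottles. -/
noncomputable def h (r : ℝ) : ℝ :=
  ∫ z in (0:ℝ)..(1/r),
    -2 * u r z * (-1 + z + r * (2 - 3 * z + r * (-4 + 4 * r + 3 * z))) / (r + z)

/-- `A₁ r = ∫₀^{1/r} u_r(z) dz`. -/
noncomputable def A₁ (r : ℝ) : ℝ := ∫ z in (0:ℝ)..(1/r), u r z

/-- `A₂ r = ∫₀^{1/r} u_r(z)/(z+r) dz`. -/
noncomputable def A₂ (r : ℝ) : ℝ := ∫ z in (0:ℝ)..(1/r), u r z / (z + r)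

/-!
For `r ≥ 1` the polynomial factor `-1 + z + r(2 - 3z + r(-4 + 4r + 3z))` of the integrand equals
`(4r³ - 4r² + 2r - 1) + (3r² - 3r + 1) z`, whose coefficients are both positive, while
`u_r > 0` on `(0, 1/r)`. So the integrand of `h r` is strictly negative on the open interval of
integration, and so is its integral.
-/

lemma u_pos {r z : ℝ} (hr : 0 < r) (hz : 0 < z) (hrz : r * z < 1) : 0 < u r z :=
  Real.sqrt_pos.mpr (div_pos (mul_pos hz (by linarith)) (by linarith))

lemma continuousOn_u {r : ℝ} (hr : 0 < r) : ContinuousOn (u r) (Set.Ici 0) :=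
  Real.continuous_sqrt.comp_continuousOn <|
    ContinuousOn.div (by fun_prop) (by fun_prop) fun z hz => by
      have : (0 : ℝ) ≤ z := hz
      positivity

lemma period_factor_pos {r z : ℝ} (hr : 1 ≤ r) (hz : 0 ≤ z) :
    0 < -1 + z + r * (2 - 3 * z + r * (-4 + 4 * r + 3 * z)) := by
  have hconst : 0 < 4 * r ^ 3 - 4 * r ^ 2 + 2 * r - 1 := by
    nlinarith [mul_nonneg (sub_nonneg.mpr hr) (sub_nonneg.mpr hr)]
  have hlin : 0 ≤ (3 * r ^ 2 - 3 * r + 1) * z := by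
    apply mul_nonneg _ hz
    nlinarith [sq_nonneg (2 * r - 1)]
  linear_combination hconst + hlin

lemma h_integrand_neg {r z : ℝ} (hr : 1 ≤ r) (hz : z ∈ Set.Ioo 0 (1 / r)) :
    -2 * u r z * (-1 + z + r * (2 - 3 * z + r * (-4 + 4 * r + 3 * z))) / (r + z) < 0 := by
  have hr0 : 0 < r := by linarith
  have hrz : r * z < 1 := by
    simpa [hr0.ne'] using (mul_lt_mul_iff_right₀ hr0).mpr hz.2
  apply div_neg_of_neg_of_pos _ (by linarith [hz.1])
  have := mul_pos (u_pos hr0 hz.1 hrz) (period_factor_pos hr hz.1.le)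
  linarith

lemma h_neg {r : ℝ} (hr : 1 ≤ r) : h r < 0 := by
  have hr0 : 0 < r := by linarith
  have hinv : 0 < 1 / r := by positivity
  set f : ℝ → ℝ := fun z =>
    -2 * u r z * (-1 + z + r * (2 - 3 * z + r * (-4 + 4 * r + 3 * z))) / (r + z)
  have hcont : ContinuousOn f (Set.uIcc 0 (1 / r)) := by
    rw [Set.uIcc_of_le hinv.le]
    refine ContinuousOn.div ?_ (by fun_prop) fun z hz => by linarith [hz.1]
    exact (continuousOn_const.mul ((continuousOn_u hr0).mono Set.Icc_subset_Ici_self)).mul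
      (by fun_prop)
  have hpos : 0 < ∫ z in (0 : ℝ)..(1 / r), -f z :=
    intervalIntegral.intervalIntegral_pos_of_pos_on hcont.intervalIntegrable.neg
      (fun z hz => neg_pos.mpr (h_integrand_neg hr hz)) hinv
  rw [intervalIntegral.integral_neg] at hpos
  exact neg_pos.mp hpos

theorem stmt_7 :
    (∀ r : ℝ, 1 ≤ r → h r < 0) ∧ (∀ r : ℝ, 0 < r → h r = 0 → r < 1) := by
  refine ⟨fun r hr => h_neg hr, fun r _ hzero => ?_⟩
  by_contra! hr
  exact (h_neg hr).ne hzero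
end

section
/- ∫₀¹ √(z(1−z)/(1+z)) dz = (4·Γ(3/4)² + Γ(−3/4)·Γ(5/4)) / (2·√(2π)), where Γ is the Gamma function; equivalently, h(1) = −(4Γ(3/4)² + Γ(−3/4)Γ(5/4))/√(2π), and in particular h(1) < 0. -/
/-!
Since `√(z (1 - z) / (1 + z)) = z (1 - z) / √(z (1 - z²))`, the substitution `t = z²` turns the
integral into `∫₀¹ (t^(-1/4) - t^(1/4)) (1 - t)^(-1/2) / 2 dt = (B(3/4, 1/2) - B(5/4, 1/2)) / 2`.
Writing the Beta values through Gamma, the functional equation reduces everything to `Γ(1/4)` and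
`Γ(3/4)`, and the reflection formula `Γ(1/4) Γ(3/4) = √2 π` gives the closed form. At `r = 1` the
integrand of `h` collapses to `-2 √(z (1 - z) / (1 + z))`, whence the value and sign of `h 1`.
-/

open MeasureTheory Real Filter

lemma ofReal_rpow_mul_one_sub_rpow {x : ℝ} (hx : x ∈ Set.Icc (0:ℝ) 1) (a b : ℝ) :
    ((x ^ (a - 1) * (1 - x) ^ (b - 1) : ℝ) : ℂ)
      = (x : ℂ) ^ ((a : ℂ) - 1) * (1 - (x : ℂ)) ^ ((b : ℂ) - 1) := by
  push_cast [Complex.ofReal_cpow hx.1, Complex.ofReal_cpow (sub_nonneg.2 hx.2)]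
  rfl

lemma intervalIntegrable_rpow_mul_one_sub_rpow {a b : ℝ} (ha : 0 < a) (hb : 0 < b) :
    IntervalIntegrable (fun t : ℝ => t ^ (a - 1) * (1 - t) ^ (b - 1)) volume 0 1 := by
  have hc := Complex.betaIntegral_convergent (u := a) (v := b) (by simpa) (by simpa)
  rw [intervalIntegrable_iff_integrableOn_Ioc_of_le zero_le_one] at hc ⊢
  refine IntegrableOn.congr_fun hc.re (fun x hx => ?_) measurableSet_Ioc
  rw [← ofReal_rpow_mul_one_sub_rpow (Set.Ioc_subset_Icc_self hx), RCLike.re_to_complex,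
    Complex.ofReal_re]

lemma integral_rpow_mul_one_sub_rpow {a b : ℝ} (ha : 0 < a) (hb : 0 < b) :
    ∫ t in (0:ℝ)..1, t ^ (a - 1) * (1 - t) ^ (b - 1) = ProbabilityTheory.beta a b := by
  rw [ProbabilityTheory.beta_eq_betaIntegralReal a b ha hb, Complex.betaIntegral,
    ← intervalIntegral.integral_congr (fun x hx => ofReal_rpow_mul_one_sub_rpow
      (by rwa [Set.uIcc_of_le zero_le_one] at hx) a b),
    intervalIntegral.integral_ofReal, Complex.ofReal_re]

lemma image_sq_Ioo {a : ℝ} (ha : 0 ≤ a) :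
    (fun z : ℝ => z ^ 2) '' Set.Ioo 0 a = Set.Ioo 0 (a ^ 2) := by
  ext x
  constructor
  · rintro ⟨z, ⟨hz0, hza⟩, rfl⟩
    exact ⟨by positivity, pow_lt_pow_left₀ hza hz0.le two_ne_zero⟩
  · rintro ⟨hx0, hxa⟩
    refine ⟨√x, ⟨Real.sqrt_pos.2 hx0, ?_⟩, Real.sq_sqrt hx0.le⟩
    simpa [Real.sqrt_sq ha] using Real.sqrt_lt_sqrt hx0.le hxa

lemma integral_comp_sq_mul {a : ℝ} (ha : 0 ≤ a) (f : ℝ → ℝ) :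
    ∫ z in (0:ℝ)..a, 2 * z * f (z ^ 2) = ∫ t in (0:ℝ)..a ^ 2, f t := by
  have hcov := integral_image_eq_integral_abs_deriv_smul (measurableSet_Ioo (a := 0) (b := a))
    (fun x _ => by simpa using (hasDerivAt_pow 2 x).hasDerivWithinAt)
    ((pow_left_strictMonoOn₀ two_ne_zero).injOn.mono fun x hx => le_of_lt hx.1) f
  rw [image_sq_Ioo ha] at hcov
  rw [intervalIntegral.integral_of_le ha, integral_Ioc_eq_integral_Ioo,
    intervalIntegral.integral_of_le (by positivity), integral_Ioc_eq_integral_Ioo, hcov]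
  refine setIntegral_congr_fun measurableSet_Ioo fun z hz => ?_
  simp [abs_of_pos hz.1]

lemma sqrt_mul_one_sub_div_one_add_eq {z : ℝ} (hz0 : 0 < z) (hz1 : z < 1) :
    √(z * (1 - z) / (1 + z)) = 2 * z * (((z ^ 2) ^ ((3:ℝ)/4 - 1) * (1 - z ^ 2) ^ ((1:ℝ)/2 - 1)
      - (z ^ 2) ^ ((5:ℝ)/4 - 1) * (1 - z ^ 2) ^ ((1:ℝ)/2 - 1)) / 2) := by
  have hz : 0 ≤ z := hz0.le
  have h1z : 0 < 1 - z := by linarith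
  have hzz : 0 < (1 - z) * (1 + z) := by nlinarith
  have e34 : (z ^ 2) ^ ((3:ℝ)/4 - 1) = (√z)⁻¹ := by
    rw [← Real.rpow_natCast, ← Real.rpow_mul hz, Real.sqrt_eq_rpow, ← Real.rpow_neg hz]
    norm_num
  have e54 : (z ^ 2) ^ ((5:ℝ)/4 - 1) = √z := by
    rw [← Real.rpow_natCast, ← Real.rpow_mul hz, Real.sqrt_eq_rpow]
    norm_num
  have e12 : (1 - z ^ 2) ^ ((1:ℝ)/2 - 1) = (√(1 - z) * √(1 + z))⁻¹ := by
    rw [← Real.sqrt_mul h1z.le, show 1 - z ^ 2 = (1 - z) * (1 + z) by ring, Real.sqrt_eq_rpow,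
      ← Real.rpow_neg hzz.le]
    norm_num
  rw [e34, e54, e12, Real.sqrt_div (mul_nonneg hz h1z.le), Real.sqrt_mul hz]
  have hz' : √z ^ 2 = z := Real.sq_sqrt hz
  have h1z' : √(1 - z) ^ 2 = 1 - z := Real.sq_sqrt h1z.le
  field_simp
  rw [hz', h1z']

lemma integral_sqrt_div_eq_beta_sub_beta :
    ∫ z in (0:ℝ)..1, √(z * (1 - z) / (1 + z))
      = (ProbabilityTheory.beta (3/4) (1/2) - ProbabilityTheory.beta (5/4) (1/2)) / 2 := by
  set f : ℝ → ℝ := fun t => (t ^ ((3:ℝ)/4 - 1) * (1 - t) ^ ((1:ℝ)/2 - 1)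
    - t ^ ((5:ℝ)/4 - 1) * (1 - t) ^ ((1:ℝ)/2 - 1)) / 2
  calc ∫ z in (0:ℝ)..1, √(z * (1 - z) / (1 + z))
      = ∫ z in (0:ℝ)..1, 2 * z * f (z ^ 2) := by
        simp only [intervalIntegral.integral_of_le zero_le_one, integral_Ioc_eq_integral_Ioo]
        exact setIntegral_congr_fun measurableSet_Ioo fun z hz =>
          sqrt_mul_one_sub_div_one_add_eq hz.1 hz.2
    _ = ∫ t in (0:ℝ)..1, f t := by rw [integral_comp_sq_mul zero_le_one, one_pow]
    _ = _ := by
        rw [intervalIntegral.integral_div, intervalIntegral.integral_sub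
            (intervalIntegrable_rpow_mul_one_sub_rpow (by norm_num) (by norm_num))
            (intervalIntegrable_rpow_mul_one_sub_rpow (by norm_num) (by norm_num)),
          integral_rpow_mul_one_sub_rpow (by norm_num) (by norm_num),
          integral_rpow_mul_one_sub_rpow (by norm_num) (by norm_num)]

lemma Gamma_one_quarter_mul_Gamma_three_quarters :
    Gamma (1/4) * Gamma (3/4) = √2 * π := by
  have h := Gamma_mul_Gamma_one_sub (1/4)
  rw [show π * (1/4) = π / 4 by ring, sin_pi_div_four, show (1:ℝ) - 1/4 = 3/4 by norm_num] at h
  rw [h]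
  field_simp
  exact (Real.sq_sqrt zero_le_two).symm

lemma beta_three_quarters_sub_beta_five_quarters :
    (ProbabilityTheory.beta (3/4) (1/2) - ProbabilityTheory.beta (5/4) (1/2)) / 2
      = (4 * Gamma (3/4) ^ 2 + Gamma (-3/4) * Gamma (5/4)) / (2 * √(2 * π)) := by
  have h14 : Gamma (1/4 + 1) = Gamma (1/4) / 4 := by
    rw [Gamma_add_one (by norm_num)]; ring
  have h34 : Gamma (3/4 + 1) = 3 / 4 * Gamma (3/4) := Gamma_add_one (by norm_num)
  have hm34 : Gamma (-3/4) = -4 / 3 * Gamma (1/4) := by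
    rw [show (1/4 : ℝ) = -3/4 + 1 by norm_num, Gamma_add_one (by norm_num)]; ring
  have hrefl := Gamma_one_quarter_mul_Gamma_three_quarters
  have hπ : √π ^ 2 = π := Real.sq_sqrt pi_pos.le
  simp only [ProbabilityTheory.beta]
  rw [show (3/4 + 1/2 : ℝ) = 1/4 + 1 by norm_num, show (5/4 + 1/2 : ℝ) = 3/4 + 1 by norm_num,
    show (5/4 : ℝ) = 1/4 + 1 by norm_num, h14, h34, hm34, Gamma_one_half_eq,
    Real.sqrt_mul zero_le_two]
  field_simp
  linear_combination (12 * Gamma (3/4) ^ 2 - Gamma (1/4) ^ 2) * (√2 * hπ - hrefl)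

lemma h_one : h 1 = -2 * ∫ z in (0:ℝ)..1, √(z * (1 - z) / (1 + z)) := by
  rw [h, div_one, ← intervalIntegral.integral_const_mul]
  refine intervalIntegral.integral_congr fun z hz => ?_
  rw [Set.uIcc_of_le zero_le_one] at hz
  have h1z : 1 + z ≠ 0 := by linarith [hz.1]
  simp only [u]
  rw [show z * (1 - 1 * z) / (z + 1) = z * (1 - z) / (1 + z) by ring]
  field_simp
  ring

lemma integral_sqrt_div_pos : 0 < ∫ z in (0:ℝ)..1, √(z * (1 - z) / (1 + z)) := by
  refine intervalIntegral.intervalIntegral_pos_of_pos_on ?_ (fun z hz => ?_) zero_lt_one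
  · refine (ContinuousOn.div (by fun_prop) (by fun_prop) fun z hz => ?_).sqrt.intervalIntegrable
    rw [Set.uIcc_of_le zero_le_one] at hz
    linarith [hz.1]
  · have : 0 < 1 - z := by linarith [hz.2]
    have : 0 < 1 + z := by linarith [hz.1]
    exact Real.sqrt_pos.2 (div_pos (mul_pos hz.1 ‹_›) ‹_›)

theorem stmt_8 :
    (∫ z in (0:ℝ)..1, Real.sqrt (z * (1 - z) / (1 + z)))
      = (4 * Real.Gamma (3/4) ^ 2 + Real.Gamma (-3/4) * Real.Gamma (5/4))
          / (2 * Real.sqrt (2 * Real.pi)) ∧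
    h 1 = -((4 * Real.Gamma (3/4) ^ 2 + Real.Gamma (-3/4) * Real.Gamma (5/4))
          / Real.sqrt (2 * Real.pi)) ∧
    h 1 < 0 := by
  have hI := integral_sqrt_div_eq_beta_sub_beta.trans beta_three_quarters_sub_beta_five_quarters
  refine ⟨hI, ?_, ?_⟩
  · rw [h_one, hI]
    ring
  · rw [h_one]
    linarith [integral_sqrt_div_pos]
end

section
/- h(r) tends to −π as r tends to +∞, i.e. Tendsto h atTop (𝓝 (−π)). -/
open MeasureTheory Real Filter

/-!
After the substitution `z = s / r` the period integral becomes
`h r = -2 ∫₀¹ √(s(1-s)) · P(r, s/r) / (r² + s)^{3/2} ds`, where `P` is the cubic factor of the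
integrand. For `s ∈ [0, 1]` the quotient `P(r, s/r) / (r² + s)^{3/2}` is squeezed between
`4 r²(r - 1)/(r + 1)³` and `4`, so it tends to `4` uniformly, and
`h r → -2 · 4 · ∫₀¹ √(s(1-s)) ds = -8 · π/8 = -π`.
-/

theorem tendsto_intervalIntegral_mul_of_le_of_le {ι : Type*} {l : Filter ι} {a b c : ℝ}
    (hab : a ≤ b) {w : ℝ → ℝ} {k : ι → ℝ → ℝ} {L U : ι → ℝ}
    (hw_nonneg : ∀ x ∈ Set.Icc a b, 0 ≤ w x) (hw : IntervalIntegrable w volume a b)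
    (hwk : ∀ᶠ i in l, IntervalIntegrable (fun x => w x * k i x) volume a b)
    (hbounds : ∀ᶠ i in l, ∀ x ∈ Set.Icc a b, L i ≤ k i x ∧ k i x ≤ U i)
    (hL : Tendsto L l (nhds c)) (hU : Tendsto U l (nhds c)) :
    Tendsto (fun i => ∫ x in a..b, w x * k i x) l (nhds (c * ∫ x in a..b, w x)) := by
  refine tendsto_of_tendsto_of_tendsto_of_le_of_le' (hL.mul_const _) (hU.mul_const _) ?_ ?_
  · filter_upwards [hwk, hbounds] with i hi hb
    rw [← intervalIntegral.integral_const_mul]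
    refine intervalIntegral.integral_mono_on hab (hw.const_mul _) hi fun x hx => ?_
    nlinarith [hw_nonneg x hx, (hb x hx).1]
  · filter_upwards [hwk, hbounds] with i hi hb
    rw [← intervalIntegral.integral_const_mul]
    refine intervalIntegral.integral_mono_on hab hi (hw.const_mul _) fun x hx => ?_
    nlinarith [hw_nonneg x hx, (hb x hx).2]

theorem integral_sqrt_mul_one_sub : ∫ s in (0:ℝ)..1, √(s * (1 - s)) = π / 8 := by
  have hsq : ∀ s : ℝ, √(1 - (2 * s + -1) ^ 2) = 2 * √(s * (1 - s)) := fun s => by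
    rw [show 1 - (2 * s + -1) ^ 2 = 2 ^ 2 * (s * (1 - s)) by ring,
      Real.sqrt_mul (by norm_num), Real.sqrt_sq zero_le_two]
  have hcirc := intervalIntegral.integral_comp_mul_add (a := 0) (b := 1)
    (fun x => √(1 - x ^ 2)) two_ne_zero (-1)
  simp only [hsq, intervalIntegral.integral_const_mul] at hcirc
  norm_num [integral_sqrt_one_sub_sq] at hcirc
  linarith

noncomputable def periodPoly (r z : ℝ) : ℝ :=
  -1 + z + r * (2 - 3 * z + r * (-4 + 4 * r + 3 * z))

theorem periodPoly_bounds {r z : ℝ} (hr : 1 ≤ r) (hz : 0 ≤ z) (hrz : r * z ≤ 1) :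
    4 * r ^ 3 - 4 * r ^ 2 ≤ periodPoly r z ∧ periodPoly r z ≤ 4 * r ^ 3 := by
  have hq : 0 ≤ 3 * r ^ 2 - 3 * r + 1 := by nlinarith
  have hupper : 0 ≤ r * (4 * r ^ 3 - periodPoly r z) := by
    unfold periodPoly
    nlinarith [mul_nonneg (sub_nonneg.2 hrz) hq]
  unfold periodPoly at hupper ⊢
  constructor
  · nlinarith [mul_nonneg hz hq]
  · linarith [(mul_nonneg_iff_of_pos_left (by linarith : (0:ℝ) < r)).1 hupper]

theorem u_div_eq {r s : ℝ} (hr : 0 < r) (hs : 0 ≤ s) :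
    u r (s / r) = √(s * (1 - s)) / √(r ^ 2 + s) := by
  rw [u, ← Real.sqrt_div' _ (by positivity)]
  congr 1
  field_simp
  ring

noncomputable def rescaledFactor (r s : ℝ) : ℝ :=
  periodPoly r (s / r) / ((r ^ 2 + s) * √(r ^ 2 + s))

theorem h_eq_integral_rescaledFactor {r : ℝ} (hr : 0 < r) :
    h r = -2 * ∫ s in (0:ℝ)..1, √(s * (1 - s)) * rescaledFactor r s := by
  have hsub := intervalIntegral.integral_comp_div (a := 0) (b := 1)
    (fun z => -2 * u r z * periodPoly r z / (r + z)) hr.ne'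
  rw [zero_div] at hsub
  calc h r = r⁻¹ * ∫ s in (0:ℝ)..1, -2 * u r (s / r) * periodPoly r (s / r) / (r + s / r) := by
        rw [hsub, smul_eq_mul, inv_mul_cancel_left₀ hr.ne']
        rfl
    _ = ∫ s in (0:ℝ)..1, -2 * (√(s * (1 - s)) * rescaledFactor r s) := by
        rw [← intervalIntegral.integral_const_mul]
        refine intervalIntegral.integral_congr fun s hs => ?_
        have hs0 : 0 ≤ s := by
          rw [Set.uIcc_of_le zero_le_one] at hs
          exact hs.1
        have hroot : 0 < √(r ^ 2 + s) := Real.sqrt_pos.2 (by positivity)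
        simp only [u_div_eq hr hs0, rescaledFactor]
        field_simp
    _ = _ := intervalIntegral.integral_const_mul _ _

theorem rescaledFactor_bounds {r s : ℝ} (hr : 1 ≤ r) (hs : s ∈ Set.Icc (0:ℝ) 1) :
    4 * (1 - r⁻¹) / (1 + r⁻¹) ^ 3 ≤ rescaledFactor r s ∧ rescaledFactor r s ≤ 4 := by
  obtain ⟨hs0, hs1⟩ := hs
  have hr0 : 0 < r := by linarith
  obtain ⟨hP_lower, hP_upper⟩ := periodPoly_bounds hr (div_nonneg hs0 hr0.le)
    (by rwa [mul_div_cancel₀ _ hr0.ne'])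
  have hroot_lower : r ≤ √(r ^ 2 + s) := (Real.le_sqrt' hr0).2 (by linarith)
  have hroot_upper : √(r ^ 2 + s) ≤ r + 1 := (Real.sqrt_le_left (by linarith)).2 (by nlinarith)
  have hD_lower : r ^ 3 ≤ (r ^ 2 + s) * √(r ^ 2 + s) := by
    rw [show r ^ 3 = r ^ 2 * r by ring]
    exact mul_le_mul (by linarith) hroot_lower hr0.le (by positivity)
  have hD_upper : (r ^ 2 + s) * √(r ^ 2 + s) ≤ (r + 1) ^ 3 := by
    rw [show (r + 1) ^ 3 = (r + 1) ^ 2 * (r + 1) by ring]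
    exact mul_le_mul (by nlinarith) hroot_upper (Real.sqrt_nonneg _) (by positivity)
  have hD : 0 < (r ^ 2 + s) * √(r ^ 2 + s) := lt_of_lt_of_le (by positivity) hD_lower
  have hP : 0 ≤ 4 * r ^ 3 - 4 * r ^ 2 := by nlinarith
  unfold rescaledFactor
  constructor
  · rw [show 4 * (1 - r⁻¹) / (1 + r⁻¹) ^ 3 = (4 * r ^ 3 - 4 * r ^ 2) / (r + 1) ^ 3 by
      field_simp]
    exact div_le_div₀ (hP.trans hP_lower) hP_lower hD hD_upper
  · rw [div_le_iff₀ hD]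
    linarith

theorem continuousOn_rescaledFactor {r : ℝ} (hr : 0 < r) :
    ContinuousOn (rescaledFactor r) (Set.Icc 0 1) := by
  unfold rescaledFactor periodPoly
  refine ContinuousOn.div (by fun_prop) (by fun_prop) fun s hs => ?_
  have : 0 < r ^ 2 + s := by nlinarith [hs.1]
  positivity

theorem stmt_11 : Filter.Tendsto h Filter.atTop (nhds (-Real.pi)) := by
  have hinv := tendsto_inv_atTop_zero (𝕜 := ℝ)
  have hlower : Tendsto (fun r : ℝ => 4 * (1 - r⁻¹) / (1 + r⁻¹) ^ 3) atTop (nhds 4) := by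
    have hcont : ContinuousAt (fun t : ℝ => 4 * (1 - t) / (1 + t) ^ 3) 0 := by
      fun_prop (disch := norm_num)
    simpa [Function.comp_def] using hcont.tendsto.comp hinv
  have hsqrt : Continuous fun s : ℝ => √(s * (1 - s)) := by fun_prop
  have hlim := tendsto_intervalIntegral_mul_of_le_of_le zero_le_one
    (fun s _ => Real.sqrt_nonneg _) (hsqrt.intervalIntegrable 0 1)
    (eventually_gt_atTop 0 |>.mono fun r hr =>
      ((hsqrt.continuousOn.mul (continuousOn_rescaledFactor hr)).intervalIntegrable_of_Icc
        zero_le_one))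
    (eventually_ge_atTop 1 |>.mono fun r hr s hs => rescaledFactor_bounds hr hs)
    hlower tendsto_const_nhds
  rw [integral_sqrt_mul_one_sub] at hlim
  rw [show -π = -2 * (4 * (π / 8)) by ring]
  refine (hlim.const_mul (-2)).congr' ?_
  filter_upwards [eventually_gt_atTop 0] with r hr
  exact (h_eq_integral_rescaledFactor hr).symm
end

section
/- For every r > 0, the function h is differentiable at r with derivative h′(r) = −2·( ((3r−1)/r)·A₁(r) + r·A₂(r) ). -/
open MeasureTheory Real Filter

/-!
Substituting `z = t / r` moves the endpoint `1 / r` to `1` and turns `u_r(z)` into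
`√(t(1-t)) / √(t + r²)`. Hence, with `J k r = ∫₀¹ √(t(1-t)) / √(t + r²)^k dt`, one has
`A₁ = J₁ / r`, `A₂ = J₃` and `h = -2 ((3r² - 3r + 1)/r · J₁ + (r - 1)(r² + 1) · J₃)`, where the
interval no longer depends on `r`. Differentiating under the integral sign gives
`J_k' = -k r J_{k+2}`, and the `J₅` produced by `J₃'` is eliminated by `J₁ = r²(r² + 1) J₅`: the
integrand of `r²(r² + 1) J₅ - J₁` is `2/3` of the `t`-derivative of `(√(t(1-t)) / √(t + r²))³`,
which vanishes at `t = 0` and `t = 1`.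
-/

open Set intervalIntegral

namespace MaximalKleinBottle

lemma integral_zero_div_eq_inv_mul (f : ℝ → ℝ) (r : ℝ) :
    ∫ z in (0:ℝ)..1 / r, f z = r⁻¹ * ∫ t in (0:ℝ)..1, f (t / r) := by
  rw [← smul_eq_mul, inv_smul_integral_comp_div, zero_div]

lemma u_div_eq {r t : ℝ} (hr : 0 < r) (ht : 0 ≤ t) :
    u r (t / r) = √(t * (1 - t)) / √(t + r ^ 2) := by
  rw [u, ← Real.sqrt_div' _ (by positivity)]
  congr 1
  field_simp

noncomputable def J (k : ℕ) (r : ℝ) : ℝ := ∫ t in (0:ℝ)..1, √(t * (1 - t)) / √(t + r ^ 2) ^ k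

lemma continuousOn_J_integrand (k : ℕ) :
    ContinuousOn (fun p : ℝ × ℝ => √(p.2 * (1 - p.2)) / √(p.2 + p.1 ^ 2) ^ k)
      {p | p.1 ≠ 0 ∧ 0 ≤ p.2} := by
  refine ContinuousOn.div (by fun_prop) (by fun_prop) fun p ⟨hp1, hp2⟩ => ?_
  have : 0 < √(p.2 + p.1 ^ 2) := Real.sqrt_pos.2 (by positivity)
  positivity

lemma intervalIntegrable_J_integrand (k : ℕ) {r : ℝ} (hr : r ≠ 0) :
    IntervalIntegrable (fun t => √(t * (1 - t)) / √(t + r ^ 2) ^ k) volume 0 1 :=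
  ((continuousOn_J_integrand k).comp (by fun_prop : Continuous fun t : ℝ => (r, t)).continuousOn
    fun _ ht => ⟨hr, ht.1⟩).intervalIntegrable_of_Icc zero_le_one

lemma A₁_eq_inv_mul_J {r : ℝ} (hr : 0 < r) : A₁ r = r⁻¹ * J 1 r := by
  rw [A₁, integral_zero_div_eq_inv_mul]
  congr 1
  refine integral_congr fun t ht => ?_
  rw [uIcc_of_le zero_le_one] at ht
  simp only [u_div_eq hr ht.1, pow_one]

lemma A₂_eq_J {r : ℝ} (hr : 0 < r) : A₂ r = J 3 r := by
  have hpt : EqOn (fun t => u r (t / r) / (t / r + r))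
      (fun t => r * (√(t * (1 - t)) / √(t + r ^ 2) ^ 3)) (uIcc 0 1) := fun t ht => by
    rw [uIcc_of_le zero_le_one] at ht
    have hd : 0 < t + r ^ 2 := by have := ht.1; positivity
    have hs : 0 < √(t + r ^ 2) := Real.sqrt_pos.2 hd
    have hs3 : √(t + r ^ 2) ^ 3 = (t + r ^ 2) * √(t + r ^ 2) := by
      rw [pow_succ, Real.sq_sqrt hd.le]
    have hrt : t / r + r = (t + r ^ 2) / r := by field_simp
    simp only [u_div_eq hr ht.1, hs3, hrt]
    field_simp
  rw [A₂, integral_zero_div_eq_inv_mul, integral_congr hpt, intervalIntegral.integral_const_mul,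
    inv_mul_cancel_left₀ hr.ne', J]

lemma h_eq_J {r : ℝ} (hr : 0 < r) :
    h r = -2 * ((3 * r ^ 2 - 3 * r + 1) / r * J 1 r + (r - 1) * (r ^ 2 + 1) * J 3 r) := by
  have hpt : EqOn
      (fun t => -2 * u r (t / r) *
        (-1 + t / r + r * (2 - 3 * (t / r) + r * (-4 + 4 * r + 3 * (t / r)))) / (r + t / r))
      (fun t => -2 * r * ((3 * r ^ 2 - 3 * r + 1) / r * (√(t * (1 - t)) / √(t + r ^ 2) ^ 1)
        + (r - 1) * (r ^ 2 + 1) * (√(t * (1 - t)) / √(t + r ^ 2) ^ 3))) (uIcc 0 1) := fun t ht => by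
    rw [uIcc_of_le zero_le_one] at ht
    have hd : 0 < t + r ^ 2 := by have := ht.1; positivity
    have hs : 0 < √(t + r ^ 2) := Real.sqrt_pos.2 hd
    have hs3 : √(t + r ^ 2) ^ 3 = (t + r ^ 2) * √(t + r ^ 2) := by
      rw [pow_succ, Real.sq_sqrt hd.le]
    have hrt : r + t / r = (t + r ^ 2) / r := by field_simp; ring
    simp only [u_div_eq hr ht.1, hs3, pow_one, hrt]
    field_simp
    ring
  have hI (k : ℕ) := intervalIntegrable_J_integrand k hr.ne'
  rw [h, integral_zero_div_eq_inv_mul, integral_congr hpt, intervalIntegral.integral_const_mul,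
    intervalIntegral.integral_add ((hI 1).const_mul _) ((hI 3).const_mul _),
    intervalIntegral.integral_const_mul, intervalIntegral.integral_const_mul, J, J]
  field_simp

lemma hasDerivAt_div_sqrt_pow (k : ℕ) (c : ℝ) {t y : ℝ} (ht : 0 < t + y ^ 2) :
    HasDerivAt (fun y => c / √(t + y ^ 2) ^ k) (-(k * y) * (c / √(t + y ^ 2) ^ (k + 2))) y := by
  have hs : 0 < √(t + y ^ 2) := Real.sqrt_pos.2 ht
  have hsq : √(t + y ^ 2) ^ 2 = t + y ^ 2 := Real.sq_sqrt ht.le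
  have hd := (((hasDerivAt_pow 2 y).const_add t).sqrt ht.ne').fun_pow k
  refine ((hasDerivAt_const y c).fun_div hd (by positivity)).congr_deriv ?_
  rcases k with _ | k
  · simp
  · simp only [Nat.add_sub_cancel]
    field_simp
    rw [← hsq]
    push_cast
    ring

theorem hasDerivAt_J (k : ℕ) {r : ℝ} (hr : r ≠ 0) :
    HasDerivAt (J k) (-(k * r) * J (k + 2) r) r := by
  set K := Metric.closedBall r (|r| / 2) ×ˢ Icc (0:ℝ) 1
  have hK : K ⊆ {p | p.1 ≠ 0 ∧ 0 ≤ p.2} := by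
    rintro ⟨x, t⟩ ⟨hx, ht⟩
    refine ⟨fun hx0 => ?_, ht.1⟩
    rw [Metric.mem_closedBall, hx0, dist_zero_left, Real.norm_eq_abs] at hx
    linarith [abs_pos.2 hr]
  have hF'_cont : ContinuousOn
      (fun p : ℝ × ℝ => -(k * p.1) * (√(p.2 * (1 - p.2)) / √(p.2 + p.1 ^ 2) ^ (k + 2))) K :=
    (ContinuousOn.fun_mul (by fun_prop) (continuousOn_J_integrand (k + 2))).mono hK
  obtain ⟨C, hC⟩ :=
    ((isCompact_closedBall r (|r| / 2)).prod isCompact_Icc).exists_bound_of_continuousOn hF'_cont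
  have hderiv := hasDerivAt_integral_of_dominated_loc_of_deriv_le (a := 0) (b := 1)
    (F' := fun x t => -(k * x) * (√(t * (1 - t)) / √(t + x ^ 2) ^ (k + 2)))
    (Metric.ball_mem_nhds r (by positivity : 0 < |r| / 2))
    ((eventually_ne_nhds hr).mono fun x hx =>
      (intervalIntegrable_iff.1 (intervalIntegrable_J_integrand k hx)).aestronglyMeasurable)
    (intervalIntegrable_J_integrand k hr)
    (intervalIntegrable_iff.1
      ((intervalIntegrable_J_integrand (k + 2) hr).const_mul _)).aestronglyMeasurable
    (.of_forall fun t ht x hx => hC (x, t)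
      ⟨Metric.ball_subset_closedBall hx,
        Ioc_subset_Icc_self (by rwa [uIoc_of_le zero_le_one] at ht)⟩)
    intervalIntegrable_const
    (.of_forall fun t ht x _ => hasDerivAt_div_sqrt_pow k _ (by
      rw [uIoc_of_le zero_le_one] at ht; have := ht.1; positivity))
  rw [intervalIntegral.integral_const_mul] at hderiv
  exact hderiv.2

lemma hasDerivAt_sqrt_ratio_cube (r : ℝ) {t : ℝ} (ht : 0 < t) (ht1 : t < 1) :
    HasDerivAt (fun t => √(t * (1 - t)) ^ 3 / √(t + r ^ 2) ^ 3)
      (3 / 2 * (r ^ 2 * (r ^ 2 + 1) * (√(t * (1 - t)) / √(t + r ^ 2) ^ 5)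
        - √(t * (1 - t)) / √(t + r ^ 2) ^ 1)) t := by
  have hc : 0 < t * (1 - t) := by nlinarith
  have hst : 0 < t + r ^ 2 := by positivity
  have hcd := (((hasDerivAt_id t).fun_mul ((hasDerivAt_id t).const_sub 1)).sqrt hc.ne').fun_pow 3
  have hsd := (((hasDerivAt_id t).add_const (r ^ 2)).sqrt hst.ne').fun_pow 3
  have hc2 : √(t * (1 - t)) ^ 2 = t * (1 - t) := Real.sq_sqrt hc.le
  have hs2 : √(t + r ^ 2) ^ 2 = t + r ^ 2 := Real.sq_sqrt hst.le
  have hcpos : 0 < √(t * (1 - t)) := Real.sqrt_pos.2 hc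
  have hspos : 0 < √(t + r ^ 2) := Real.sqrt_pos.2 hst
  refine (hcd.fun_div hsd (by positivity)).congr_deriv ?_
  simp only [id]
  field_simp
  linear_combination 3 * √(t * (1 - t)) ^ 2 * √(t + r ^ 2) ^ 2 *
    ((1 - 2 * t + √(t + r ^ 2) ^ 2 + (t + r ^ 2)) * hs2 - hc2)

theorem J_one_eq_mul_J_five {r : ℝ} (hr : r ≠ 0) : J 1 r = r ^ 2 * (r ^ 2 + 1) * J 5 r := by
  have hcont : ContinuousOn (fun t => √(t * (1 - t)) ^ 3 / √(t + r ^ 2) ^ 3) (Icc 0 1) :=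
    ContinuousOn.div (by fun_prop) (by fun_prop) fun t ht =>
      (pow_pos (Real.sqrt_pos.2 (by have := ht.1; positivity)) 3).ne'
  have hFTC := intervalIntegral.integral_eq_sub_of_hasDerivAt_of_le zero_le_one hcont
    (fun t ht => hasDerivAt_sqrt_ratio_cube r ht.1 ht.2)
    ((((intervalIntegrable_J_integrand 5 hr).const_mul _).sub
      (intervalIntegrable_J_integrand 1 hr)).const_mul _)
  rw [intervalIntegral.integral_const_mul, intervalIntegral.integral_sub
    ((intervalIntegrable_J_integrand 5 hr).const_mul _) (intervalIntegrable_J_integrand 1 hr),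
    intervalIntegral.integral_const_mul] at hFTC
  norm_num at hFTC
  simp only [J, pow_one]
  linarith

end MaximalKleinBottle

open MaximalKleinBottle in
theorem stmt_12 (r : ℝ) (hr : 0 < r) :
    HasDerivAt h (-2 * ((3 * r - 1) / r * A₁ r + r * A₂ r)) r := by
  have hh : h =ᶠ[nhds r]
      fun x => -2 * ((3 * x ^ 2 - 3 * x + 1) / x * J 1 x + (x - 1) * (x ^ 2 + 1) * J 3 x) :=
    (eventually_gt_nhds hr).mono fun x hx => h_eq_J hx
  have hid := hasDerivAt_id' r
  have hc₁ :=
    ((((hid.fun_pow 2).const_mul 3).fun_sub (hid.const_mul 3)).add_const 1).fun_div hid hr.ne'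
  have hc₃ := (hid.sub_const 1).fun_mul ((hid.fun_pow 2).add_const 1)
  refine ((((hc₁.fun_mul (hasDerivAt_J 1 hr.ne')).fun_add
    (hc₃.fun_mul (hasDerivAt_J 3 hr.ne'))).const_mul (-2)).congr_of_eventuallyEq hh).congr_deriv ?_
  rw [A₁_eq_inv_mul_J hr, A₂_eq_J hr]
  field_simp
  norm_num
  linear_combination (-3 * r * (r - 1)) * J_one_eq_mul_J_five hr.ne'
end

section
/- If r₀ ∈ (0,1) and h(r₀) = 0, then h is differentiable at r₀ with h′(r₀) = q(r₀)·A₁(r₀), where q(r) = 2(r³ − 3r² + 4r − 1)/(r(r−1)(r²+1)). -/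
open MeasureTheory Real Filter

/-- The rational function `q` controlling the sign of `h'` at zeros of `h`. -/
noncomputable def q (r : ℝ) : ℝ :=
  2 * (r ^ 3 - 3 * r ^ 2 + 4 * r - 1) / (r * (r - 1) * (r ^ 2 + 1))

/-!
The substitution `z = t / r` turns the integrals over `(0, 1/r)` into `r⁻¹` times combinations of
`J_p(s) = ∫₀¹ √(t(1-t)) (t+s)^p dt` at `s = r²`; in particular `h r = r⁻¹ N(r)` with
`N = c₀ J_{-1/2} + c₁ J_{-3/2}` for explicit polynomials `c₀, c₁`, and
`A₁ r = r⁻¹ J_{-1/2}(r²)`. Differentiating under the integral sign gives `J_p' = p J_{p-1}`, and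
integrating the exact form `d[(t(1-t))^{3/2} (t+s)^{-3/2}]` over `[0, 1]` gives
`J_{-5/2} = J_{-1/2} / (s(1+s))`, so `N'` is again a combination of `J_{-1/2}` and `J_{-3/2}`.
At a zero of `h` we have `N = 0`, hence `h' = r⁻¹ N'`, and `N = 0` eliminates `J_{-3/2}`,
leaving `q · r⁻¹ J_{-1/2} = q · A₁`.
-/

namespace MaximalKleinBottle

noncomputable def semicircle (t : ℝ) : ℝ := √(t * (1 - t))

noncomputable def semicircleIntegral (p s : ℝ) : ℝ :=
  ∫ t in (0:ℝ)..1, semicircle t * (t + s) ^ p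

lemma continuous_semicircle : Continuous semicircle := by
  unfold semicircle; fun_prop

lemma semicircle_nonneg (t : ℝ) : 0 ≤ semicircle t := sqrt_nonneg _

lemma semicircle_le_one (t : ℝ) : semicircle t ≤ 1 := by
  rw [semicircle, sqrt_le_one]
  nlinarith [sq_nonneg (2 * t - 1)]

lemma semicircle_eq_rpow (t : ℝ) : semicircle t = (t * (1 - t)) ^ (1 / 2 : ℝ) :=
  sqrt_eq_rpow _

lemma continuousOn_rpow_add {s : ℝ} (hs : 0 < s) (p : ℝ) :
    ContinuousOn (fun t : ℝ => (t + s) ^ p) (Set.Ici 0) := fun t ht =>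
  ((continuousAt_id.add continuousAt_const).rpow_const
    (Or.inl (show t + s ≠ 0 by have := Set.mem_Ici.mp ht; positivity))).continuousWithinAt

lemma continuousOn_semicircle_mul_rpow {s : ℝ} (hs : 0 < s) (p : ℝ) :
    ContinuousOn (fun t : ℝ => semicircle t * (t + s) ^ p) (Set.Ici 0) :=
  continuous_semicircle.continuousOn.mul (continuousOn_rpow_add hs p)

lemma intervalIntegrable_semicircle_mul_rpow {s : ℝ} (hs : 0 < s) (p : ℝ) :
    IntervalIntegrable (fun t : ℝ => semicircle t * (t + s) ^ p) volume 0 1 :=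
  ((continuousOn_semicircle_mul_rpow hs p).mono
    (by simp [Set.Icc_subset_Ici_self])).intervalIntegrable

lemma aestronglyMeasurable_semicircle_mul_rpow {s : ℝ} (hs : 0 < s) (p : ℝ) :
    AEStronglyMeasurable (fun t : ℝ => semicircle t * (t + s) ^ p)
      (volume.restrict (Set.uIoc 0 1)) := by
  rw [Set.uIoc_of_le zero_le_one]
  exact ((continuousOn_semicircle_mul_rpow hs p).mono
    (Set.Ioc_subset_Icc_self.trans Set.Icc_subset_Ici_self)).aestronglyMeasurable
    measurableSet_Ioc

lemma hasDerivAt_semicircleIntegral {p s : ℝ} (hp : p ≤ 1) (hs : 0 < s) :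
    HasDerivAt (semicircleIntegral p) (p * semicircleIntegral (p - 1) s) s := by
  have hs2 : 0 < s / 2 := half_pos hs
  have near {t x : ℝ} (ht : t ∈ Set.uIoc (0:ℝ) 1) (hx : x ∈ Metric.ball s (s / 2)) :
      s / 2 ≤ t + x := by
    rw [Set.uIoc_of_le zero_le_one] at ht
    rw [Metric.mem_ball, dist_eq, abs_lt] at hx
    linarith [ht.1]
  obtain ⟨-, hderiv⟩ := intervalIntegral.hasDerivAt_integral_of_dominated_loc_of_deriv_le
    (F := fun x t => semicircle t * (t + x) ^ p)
    (F' := fun x t => semicircle t * (p * (t + x) ^ (p - 1)))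
    (bound := fun _ => |p| * (s / 2) ^ (p - 1)) (Metric.ball_mem_nhds s hs2)
    (Filter.eventually_of_mem (Ioi_mem_nhds hs) fun x hx =>
      aestronglyMeasurable_semicircle_mul_rpow hx p)
    (intervalIntegrable_semicircle_mul_rpow hs p)
    (by simpa only [mul_left_comm] using
      (aestronglyMeasurable_semicircle_mul_rpow hs (p - 1)).const_mul p)
    (Filter.Eventually.of_forall fun t ht x hx => by
      have hle := near ht hx
      rw [norm_mul, norm_mul, norm_of_nonneg (semicircle_nonneg t), Real.norm_eq_abs,
        norm_of_nonneg (rpow_nonneg (hs2.le.trans hle) _)]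
      calc semicircle t * (|p| * (t + x) ^ (p - 1))
          ≤ 1 * (|p| * (s / 2) ^ (p - 1)) :=
            mul_le_mul (semicircle_le_one t) (mul_le_mul_of_nonneg_left
              (rpow_le_rpow_of_nonpos hs2 hle (by linarith)) (abs_nonneg p))
              (mul_nonneg (abs_nonneg p) (rpow_nonneg (hs2.le.trans hle) _)) zero_le_one
        _ = |p| * (s / 2) ^ (p - 1) := one_mul _)
    intervalIntegrable_const
    (Filter.Eventually.of_forall fun t ht x hx =>
      ((((hasDerivAt_id x).const_add t).rpow_const
        (Or.inl (hs2.trans_le (near ht hx)).ne')).const_mul (semicircle t)).congr_deriv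
        (by rw [one_mul]; rfl))
  refine (hderiv : HasDerivAt (semicircleIntegral p) _ s).congr_deriv ?_
  rw [semicircleIntegral, ← intervalIntegral.integral_const_mul]
  exact intervalIntegral.integral_congr fun t _ => by ring

lemma hasDerivAt_semicircle_cube_mul_rpow {s t : ℝ} (hs : 0 < s) (ht : t ∈ Set.Icc (0:ℝ) 1) :
    HasDerivAt (fun t : ℝ => (t * (1 - t)) ^ (3 / 2 : ℝ) * (t + s) ^ (-3 / 2 : ℝ))
      (3 / 2 * (s * (1 + s) * (semicircle t * (t + s) ^ (-5 / 2 : ℝ))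
        - semicircle t * (t + s) ^ (-1 / 2 : ℝ))) t := by
  have hA : 0 ≤ t * (1 - t) := mul_nonneg ht.1 (by linarith [ht.2])
  have hx : t + s ≠ 0 := by linarith [ht.1]
  have hprod := (((hasDerivAt_id t).mul ((hasDerivAt_id t).const_sub 1)).rpow_const
    (p := 3 / 2) (Or.inr (by norm_num))).mul
    (((hasDerivAt_id t).add_const s).rpow_const (p := -3 / 2) (Or.inl hx))
  refine hprod.congr_deriv ?_
  have h32 : (t * (1 - t)) ^ (3 / 2 : ℝ) = t * (1 - t) * semicircle t := by
    rw [semicircle_eq_rpow, show (3 / 2 : ℝ) = 1 + 1 / 2 by norm_num,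
      rpow_one_add' hA (by norm_num)]
  have h12 : (t * (1 - t)) ^ (3 / 2 - 1 : ℝ) = semicircle t := by
    rw [semicircle_eq_rpow]; norm_num
  have hm32 : (t + s) ^ (-3 / 2 : ℝ) = (t + s) ^ (-5 / 2 : ℝ) * (t + s) := by
    rw [← rpow_add_one hx]; norm_num
  have hm52 : (t + s) ^ (-3 / 2 - 1 : ℝ) = (t + s) ^ (-5 / 2 : ℝ) := by norm_num
  have hm12 : (t + s) ^ (-1 / 2 : ℝ) = (t + s) ^ (-5 / 2 : ℝ) * (t + s) ^ 2 := by
    rw [← rpow_add_natCast hx]; norm_num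
  simp only [id, Pi.mul_apply, h32, h12, hm32, hm52, hm12]
  ring

/-- Integrate `hasDerivAt_semicircle_cube_mul_rpow`: the primitive vanishes at `t = 0, 1`. -/
lemma semicircleIntegral_neg_five_halves {s : ℝ} (hs : 0 < s) :
    semicircleIntegral (-5 / 2) s = semicircleIntegral (-1 / 2) s / (s * (1 + s)) := by
  have hint := fun p => intervalIntegrable_semicircle_mul_rpow hs p
  have hFTC := intervalIntegral.integral_eq_sub_of_hasDerivAt
    (fun t ht => hasDerivAt_semicircle_cube_mul_rpow hs (by rwa [Set.uIcc_of_le zero_le_one] at ht))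
    ((((hint _).const_mul _).sub (hint _)).const_mul _)
  rw [intervalIntegral.integral_const_mul, intervalIntegral.integral_sub ((hint _).const_mul _)
    (hint _), intervalIntegral.integral_const_mul] at hFTC
  norm_num at hFTC
  rw [eq_div_iff (by positivity)]
  unfold semicircleIntegral
  linarith

lemma integral_zero_one_div (f : ℝ → ℝ) {r : ℝ} (hr : r ≠ 0) :
    ∫ z in (0:ℝ)..1 / r, f z = r⁻¹ * ∫ t in (0:ℝ)..1, f (t / r) := by
  rw [intervalIntegral.integral_comp_div f hr, zero_div, smul_eq_mul, inv_mul_cancel_left₀ hr]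

lemma u_div {r t : ℝ} (hr : 0 < r) (ht : t ∈ Set.uIcc (0:ℝ) 1) :
    u r (t / r) = semicircle t * (t + r ^ 2) ^ (-1 / 2 : ℝ) := by
  rw [Set.uIcc_of_le zero_le_one] at ht
  have hx : 0 < t + r ^ 2 := by nlinarith [ht.1]
  have harg : t / r * (1 - r * (t / r)) / (t / r + r) = t * (1 - t) / (t + r ^ 2) := by
    field_simp
  rw [u, harg, sqrt_div' _ hx.le, div_eq_mul_inv, sqrt_eq_rpow (t + r ^ 2),
    ← rpow_neg hx.le, semicircle]
  norm_num

lemma A₁_eq_inv_mul_semicircleIntegral {r : ℝ} (hr : 0 < r) :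
    A₁ r = r⁻¹ * semicircleIntegral (-1 / 2) (r ^ 2) := by
  rw [A₁, integral_zero_one_div _ hr.ne', semicircleIntegral]
  exact congrArg _ (intervalIntegral.integral_congr fun t ht => u_div hr ht)

noncomputable def periodNumerator (r : ℝ) : ℝ :=
  (-6 * r ^ 2 + 6 * r - 2) * semicircleIntegral (-1 / 2) (r ^ 2)
    + (-2 * r ^ 4 + 2 * r ^ 3 - 2 * r ^ 2 + 2 * r) * semicircleIntegral (-3 / 2) (r ^ 2)

lemma h_eq_inv_mul_periodNumerator {r : ℝ} (hr : 0 < r) : h r = r⁻¹ * periodNumerator r := by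
  have hint := fun p => intervalIntegrable_semicircle_mul_rpow (pow_pos hr 2) p
  rw [h, integral_zero_one_div _ hr.ne', periodNumerator]
  congr 1
  rw [semicircleIntegral, semicircleIntegral, ← intervalIntegral.integral_const_mul,
    ← intervalIntegral.integral_const_mul,
    ← intervalIntegral.integral_add ((hint _).const_mul _) ((hint _).const_mul _)]
  refine intervalIntegral.integral_congr fun t ht => ?_
  have hx : 0 < t + r ^ 2 := by
    rw [Set.uIcc_of_le zero_le_one] at ht; nlinarith [ht.1]
  have hm32 : (t + r ^ 2) ^ (-3 / 2 : ℝ) = (t + r ^ 2) ^ (-1 / 2 : ℝ) / (t + r ^ 2) := by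
    rw [← rpow_sub_one hx.ne']; norm_num
  have hden : r + t / r = (t + r ^ 2) / r := by field_simp; ring
  rw [u_div hr ht, hm32, hden]
  field_simp
  ring

lemma hasDerivAt_semicircleIntegral_sq {p r : ℝ} (hp : p ≤ 1) (hr : r ≠ 0) :
    HasDerivAt (fun r => semicircleIntegral p (r ^ 2))
      (p * semicircleIntegral (p - 1) (r ^ 2) * (2 * r)) r := by
  have hsq : HasDerivAt (fun r : ℝ => r ^ 2) (2 * r) r := by simpa using hasDerivAt_pow 2 r
  exact (hasDerivAt_semicircleIntegral hp (by positivity)).comp r hsq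

lemma hasDerivAt_periodNumerator {r : ℝ} (hr : r ≠ 0) :
    HasDerivAt periodNumerator (-6 * r * semicircleIntegral (-1 / 2) (r ^ 2)
      + (2 - 2 * r - 2 * r ^ 3) * semicircleIntegral (-3 / 2) (r ^ 2)) r := by
  have hJ₀ := hasDerivAt_semicircleIntegral_sq (p := -1 / 2) (by norm_num) hr
  have hJ₁ := hasDerivAt_semicircleIntegral_sq (p := -3 / 2) (by norm_num) hr
  have hx := hasDerivAt_id r
  have hc₀ := (((hasDerivAt_pow 2 r).const_mul (-6)).add (hx.const_mul 6)).sub_const 2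
  have hc₁ := ((((hasDerivAt_pow 4 r).const_mul (-2)).add ((hasDerivAt_pow 3 r).const_mul 2)).sub
    ((hasDerivAt_pow 2 r).const_mul 2)).add (hx.const_mul 2)
  refine ((hc₀.mul hJ₀).add (hc₁.mul hJ₁)).congr_deriv ?_
  rw [show (-1 / 2 - 1 : ℝ) = -3 / 2 by norm_num, show (-3 / 2 - 1 : ℝ) = -5 / 2 by norm_num,
    semicircleIntegral_neg_five_halves (by positivity)]
  simp only [id, Pi.add_apply, Pi.sub_apply]
  field_simp
  ring

end MaximalKleinBottle

open MaximalKleinBottle in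
theorem stmt_13 (r₀ : ℝ) (hr₀ : r₀ ∈ Set.Ioo (0:ℝ) 1) (hzero : h r₀ = 0) :
    HasDerivAt h (q r₀ * A₁ r₀) r₀ := by
  obtain ⟨hr0, hr1⟩ := hr₀
  have hN : periodNumerator r₀ = 0 := by
    simpa [h_eq_inv_mul_periodNumerator hr0, hr0.ne'] using hzero
  have hderiv : HasDerivAt h _ r₀ :=
    ((hasDerivAt_inv hr0.ne').mul (hasDerivAt_periodNumerator hr0.ne')).congr_of_eventuallyEq
      (Filter.eventually_of_mem (Ioi_mem_nhds hr0) fun r hr => h_eq_inv_mul_periodNumerator hr)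
  refine hderiv.congr_deriv ?_
  rw [hN, A₁_eq_inv_mul_semicircleIntegral hr0, q]
  unfold periodNumerator at hN
  set J₀ := semicircleIntegral (-1 / 2) (r₀ ^ 2)
  set J₁ := semicircleIntegral (-3 / 2) (r₀ ^ 2)
  have hr₀' : r₀ - 1 ≠ 0 := by linarith
  field_simp
  linear_combination (r₀ ^ 3 + r₀ - 1) * hN
end

section
/- Let r > 0 and x ∈ (0, 1/r). Then the function G(z) = 2·u_r(z)·(z − 2r³z² + r²z(1+2z) − r(−1 + 2z + z²))/(r·z) is differentiable at x with derivative G′(x) = −2·u_r(x)·(−1 + x + r(2 − 3x + r(−4 + 4r + 3x)))/(r+x) − u_r(x)·(1+x)²/x². -/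
open MeasureTheory Real Filter

/-!
Write `u_r = √q` with `q z = z(1 − rz)/(z + r)`, so that `u_r' = u_r · (log q)'/2` with
`(log q)' = 1/z − r/(1 − rz) − 1/(z + r)`. The function to differentiate is `u_r · g`, where for
`z ≠ 0` the rational factor is `g z = 2/z + 2(1 − r)²/r − 2(1 − 2r + 2r²) z`. Hence its derivative
is `u_r · ((log q)' g/2 + g')`, and the claim reduces to a rational-function identity.
-/

/-- Where `f x < 0` both sides are `0`, since `√` vanishes near `f x`. -/
theorem HasDerivAt.sqrt_mul_div {f : ℝ → ℝ} {f' x : ℝ} (hf : HasDerivAt f f' x)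
    (hx : f x ≠ 0) : HasDerivAt (fun y => √(f y)) (√(f x) * f' / (2 * f x)) x := by
  convert hf.sqrt hx using 1
  rcases hx.lt_or_gt with hneg | hpos
  · simp [Real.sqrt_eq_zero_of_nonpos hneg.le]
  · have hsqrt : √(f x) ≠ 0 := (Real.sqrt_pos.mpr hpos).ne'
    field_simp
    rw [Real.sq_sqrt hpos.le, mul_comm]

theorem hasDerivAt_u {r x : ℝ} (hx : x ≠ 0) (hrx : 1 - r * x ≠ 0) (hxr : x + r ≠ 0) :
    HasDerivAt (u r) (u r x * (1 / x - r / (1 - r * x) - 1 / (x + r)) / 2) x := by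
  have hq : HasDerivAt (fun z => z * (1 - r * z) / (z + r))
      (((1 - 2 * r * x) * (x + r) - x * (1 - r * x)) / (x + r) ^ 2) x :=
    ((hasDerivAt_id' x).mul (((hasDerivAt_id' x).const_mul r).const_sub 1)).div
      ((hasDerivAt_id' x).add_const r) hxr |>.congr_deriv (by simp only [Pi.mul_apply]; ring)
  refine (hq.sqrt_mul_div (div_ne_zero (mul_ne_zero hx hrx) hxr)).congr_deriv ?_
  change u r x * _ / _ = _
  field_simp
  ring

theorem hasDerivAt_two_mul_poly_div_mul {r x : ℝ} (hr : r ≠ 0) (hx : x ≠ 0) :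
    HasDerivAt
      (fun z : ℝ => 2 * (z - 2 * r ^ 3 * z ^ 2 + r ^ 2 * z * (1 + 2 * z)
          - r * (-1 + 2 * z + z ^ 2)) / (r * z))
      (-2 * (1 - 2 * r + 2 * r ^ 2) - 2 / x ^ 2) x := by
  have hsimple : HasDerivAt
      (fun z : ℝ => 2 * z⁻¹ + 2 * (1 - r) ^ 2 / r - 2 * (1 - 2 * r + 2 * r ^ 2) * z)
      (-2 * (1 - 2 * r + 2 * r ^ 2) - 2 / x ^ 2) x :=
    (((hasDerivAt_inv hx).const_mul 2).add_const _).sub ((hasDerivAt_id' x).const_mul _)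
      |>.congr_deriv (by field_simp; ring)
  refine hsimple.congr_of_eventuallyEq ((eventually_ne_nhds hx).mono fun z hz => ?_)
  field_simp
  ring

theorem stmt_17 (r : ℝ) (hr : 0 < r) (x : ℝ) (hx : x ∈ Set.Ioo (0:ℝ) (1/r)) :
    HasDerivAt
      (fun z : ℝ =>
        2 * u r z * (z - 2 * r ^ 3 * z ^ 2 + r ^ 2 * z * (1 + 2 * z)
          - r * (-1 + 2 * z + z ^ 2)) / (r * z))
      (-2 * u r x * (-1 + x + r * (2 - 3 * x + r * (-4 + 4 * r + 3 * x))) / (r + x)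
        - u r x * (1 + x) ^ 2 / x ^ 2) x := by
  obtain ⟨hx0, hx1⟩ := hx
  have hxr : x * r < 1 := (lt_div_iff₀ hr).mp hx1
  have hrx : 1 - r * x ≠ 0 := by linarith
  have hxr' : 1 - x * r ≠ 0 := by linarith
  refine ((hasDerivAt_u hx0.ne' hrx (by linarith)).mul
      (hasDerivAt_two_mul_poly_div_mul hr.ne' hx0.ne')).congr_deriv ?_ |>.congr_of_eventuallyEq
    (.of_forall fun z => by simp only [Pi.mul_apply]; ring)
  field_simp
  ring
end
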